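/- Let X be a nonempty finite set of positive integers. For each positive integer d let X_d = {x ∈ X : d ∣ x}. Then the number of nonempty subsets A of X with gcd(A) = 1 equals Σ_{d=1}^{max X} μ(d)·(2^{|X_d|} − 1). -/
import Mathlib

open Finset
open ArithmeticFunction (moebius)

lemma sum_moebius_divisors' (n : ℕ) :
    ∑ d ∈ n.divisors, (moebius d : ℤ) = if n = 1 then 1 else 0 := by
  have := congrArg (fun f : ArithmeticFunction ℤ => f n) ArithmeticFunction.moebius_mul_coe_zeta
  simp only [ArithmeticFunction.coe_mul_zeta_apply, ArithmeticFunction.one_apply] at this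
  exact this

lemma dvd_gcd_iff' (A : Finset ℕ) (d : ℕ) : d ∣ A.gcd id ↔ ∀ x ∈ A, d ∣ x := by
  constructor
  · exact fun h x hx => h.trans (Finset.gcd_dvd hx)
  · exact fun h => Finset.dvd_gcd h

lemma pow_card_sub_one (d : ℕ) (X : Finset ℕ) :
    ((2:ℤ) ^ (X.filter (fun x => d ∣ x)).card - 1) =
    ∑ A ∈ X.powerset, (if A.Nonempty ∧ d ∣ A.gcd id then (1:ℤ) else 0) := by
  have h1 : X.powerset.filter (fun A => A.Nonempty ∧ d ∣ A.gcd id)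
      = (X.filter (fun x => d ∣ x)).powerset.filter (fun A => A.Nonempty) := by
    ext A
    simp only [mem_filter, mem_powerset, Finset.subset_iff, mem_filter, dvd_gcd_iff']
    constructor
    · rintro ⟨hsub, hne, hdvd⟩
      exact ⟨fun x hx => ⟨hsub hx, hdvd x hx⟩, hne⟩
    · rintro ⟨hsub, hne⟩
      exact ⟨fun x hx => (hsub hx).1, hne, fun x hx => (hsub hx).2⟩
  have h2 : (X.filter (fun x => d ∣ x)).powerset.filter (fun A => A.Nonempty)
      = (X.filter (fun x => d ∣ x)).powerset \ {∅} := by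
    ext A
    simp [Finset.nonempty_iff_ne_empty]
  rw [← Finset.sum_filter, Finset.sum_const, nsmul_eq_mul, mul_one, h1, h2,
    Finset.card_sdiff_of_subset (by simp), Finset.card_powerset, Finset.card_singleton]
  have : 1 ≤ 2 ^ (X.filter (fun x => d ∣ x)).card := Nat.one_le_two_pow
  push_cast [this]
  ring

/-- Equation (8): For a nonempty finite set `X` of positive integers, the
number `f(X)` of relatively prime nonempty subsets of `X` equals
`Σ_{d=1}^{max X} μ(d)·(2^{|X_d|} − 1)`. -/
theorem card_relPrime_subsets
    (X : Finset ℕ) (hX : X.Nonempty) (hpos : ∀ x ∈ X, 0 < x) :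
    ((X.powerset.filter (fun A => A.Nonempty ∧ A.gcd id = 1)).card : ℤ) =
    ∑ d ∈ Finset.Icc 1 (X.max' hX),
      ArithmeticFunction.moebius d * (2 ^ (X.filter (fun x => d ∣ x)).card - 1) := by
  set M := X.max' hX with hM
  calc ((X.powerset.filter (fun A => A.Nonempty ∧ A.gcd id = 1)).card : ℤ)
      = ∑ A ∈ X.powerset, (if A.Nonempty ∧ A.gcd id = 1 then (1:ℤ) else 0) := by
        rw [← Finset.sum_filter, Finset.sum_const, nsmul_eq_mul, mul_one]
    _ = ∑ A ∈ X.powerset, ∑ d ∈ Finset.Icc 1 M,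
          (if A.Nonempty ∧ d ∣ A.gcd id then (moebius d : ℤ) else 0) := by
        apply Finset.sum_congr rfl
        intro A hA
        rw [Finset.mem_powerset] at hA
        by_cases hne : A.Nonempty
        · have hne' := hne
          obtain ⟨a, ha⟩ := hne'
          have haX : a ∈ X := hA ha
          have hapos : 0 < a := hpos a haX
          have hga : A.gcd id ∣ a := Finset.gcd_dvd ha
          have hgne : A.gcd id ≠ 0 := by
            intro h
            rw [h] at hga
            omega
          have haM : a ≤ M := X.le_max' a haX
          have hfilt : (Finset.Icc 1 M).filter (fun d => d ∣ A.gcd id)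
              = (A.gcd id).divisors := by
            ext d
            simp only [Finset.mem_filter, Finset.mem_Icc, Nat.mem_divisors]
            constructor
            · rintro ⟨_, hd⟩; exact ⟨hd, hgne⟩
            · rintro ⟨hd, _⟩
              have hda : d ∣ a := hd.trans hga
              have hd1 : 1 ≤ d := Nat.pos_of_dvd_of_pos hda hapos
              have hdM : d ≤ M := le_trans (Nat.le_of_dvd hapos hda) haM
              exact ⟨⟨hd1, hdM⟩, hd⟩
          simp only [hne, true_and]
          rw [← Finset.sum_filter, hfilt, sum_moebius_divisors']
        · simp [hne]
    _ = ∑ d ∈ Finset.Icc 1 M, ∑ A ∈ X.powerset,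
          (if A.Nonempty ∧ d ∣ A.gcd id then (moebius d : ℤ) else 0) := Finset.sum_comm
    _ = ∑ d ∈ Finset.Icc 1 M,
          (moebius d : ℤ) * (2 ^ (X.filter (fun x => d ∣ x)).card - 1) := by
        apply Finset.sum_congr rfl
        intro d _
        rw [pow_card_sub_one, Finset.mul_sum]
        apply Finset.sum_congr rfl
        intro A _
        split <;> simp
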